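/- arXiv:2208.07180 — 3 statements merged into one kernel-verified Lean document; each statement's English description precedes it below -/
import Mathlib

section
/- A hyperproperty H that contains the empty set of traces is a pseudo hyperproperty if and only if for all trace sets T, T ∈ H iff every singleton subset {t} of T is in H, i.e., T ∈ H ↔ ∀ t ∈ T, {t} ∈ H. -/
abbrev Trace (AP : Type) := ℕ → Set AP

def IsPseudoHyperproperty {AP : Type} (H : Set (Set (Trace AP))) : Prop :=
  ∃ P : Set (Trace AP), ∀ T : Set (Trace AP), T ∈ H ↔ ∀ t ∈ T, t ∈ P

theorem singleton_mem_iff_of_forall_mem_iff_subset {α : Type*} {H : Set (Set α)} {P : Set α}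
    (hP : ∀ T, T ∈ H ↔ T ⊆ P) (t : α) : {t} ∈ H ↔ t ∈ P :=
  (hP {t}).trans Set.singleton_subset_iff

theorem pseudo_iff_singleton_characterization_general {AP : Type} (H : Set (Set (Trace AP))) :
    IsPseudoHyperproperty H ↔
      ∀ T : Set (Trace AP), T ∈ H ↔ ∀ t ∈ T, ({t} : Set (Trace AP)) ∈ H := by
  constructor
  · rintro ⟨P, hP⟩ T
    simp only [hP T, singleton_mem_iff_of_forall_mem_iff_subset hP]
  · intro h
    exact ⟨{t | ({t} : Set (Trace AP)) ∈ H}, h⟩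

theorem pseudo_iff_singleton_characterization {AP : Type} (H : Set (Set (Trace AP)))
    (hEmpty : (∅ : Set (Trace AP)) ∈ H) :
    IsPseudoHyperproperty H ↔
      ∀ T : Set (Trace AP), T ∈ H ↔ ∀ t ∈ T, ({t} : Set (Trace AP)) ∈ H :=
  pseudo_iff_singleton_characterization_general H
end

section
/- A universal HyperLTL formula φ = ∀π₁...∀πₙ.ψ describes a pseudo hyperproperty if and only if φ is semantically equivalent to its ∀¹ counterpart φ[π] = ∀π.ψ[π₁↦π,...,πₙ↦π], i.e., for all trace sets T, T ⊨ φ ↔ T ⊨ φ[π]. -/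
inductive QF (AP V : Type) : Type
  | atom : AP → V → QF AP V
  | neg : QF AP V → QF AP V
  | conj : QF AP V → QF AP V → QF AP V
  | next : QF AP V → QF AP V
  | untl : QF AP V → QF AP V → QF AP V

def QF.sat {AP V : Type} (A : V → Trace AP) : ℕ → QF AP V → Prop
  | i, .atom a π => a ∈ A π i
  | i, .neg ψ => ¬ QF.sat A i ψ
  | i, .conj ψ₁ ψ₂ => QF.sat A i ψ₁ ∧ QF.sat A i ψ₂
  | i, .next ψ => QF.sat A (i + 1) ψ
  | i, .untl ψ₁ ψ₂ => ∃ j, i ≤ j ∧ QF.sat A j ψ₂ ∧ ∀ k, i ≤ k → k < j → QF.sat A k ψ₁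

def QF.rename {AP V W : Type} (f : V → W) : QF AP V → QF AP W
  | .atom a π => .atom a (f π)
  | .neg ψ => .neg (ψ.rename f)
  | .conj ψ₁ ψ₂ => .conj (ψ₁.rename f) (ψ₂.rename f)
  | .next ψ => .next (ψ.rename f)
  | .untl ψ₁ ψ₂ => .untl (ψ₁.rename f) (ψ₂.rename f)

def satAll {AP V : Type} (T : Set (Trace AP)) (ψ : QF AP V) : Prop :=
  ∀ A : V → Trace AP, (∀ v, A v ∈ T) → ψ.sat A 0

/-! On a singleton `{t}` the only assignment sends every variable to `t`, so `φ` and its collapse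
`φ[π]` agree on singletons, while `φ[π]` holds on `T` iff it holds on every singleton of `T`.
Hence `φ[π]` is the pseudo hyperproperty of the traces `t` with `{t} ⊨ φ`; and a pseudo
hyperproperty is determined by its singletons, so if `φ` is one it coincides with `φ[π]`. -/

section

variable {AP V : Type}

theorem QF.sat_rename {W : Type} (f : V → W) (ψ : QF AP V) (A : W → Trace AP) (i : ℕ) :
    (ψ.rename f).sat A i ↔ ψ.sat (A ∘ f) i := by
  induction ψ generalizing i <;> simp only [QF.rename, QF.sat, Function.comp_apply, *]

theorem satAll_singleton (ψ : QF AP V) (t : Trace AP) :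
    satAll {t} ψ ↔ ψ.sat (fun _ => t) 0 := by
  refine ⟨fun h => h _ fun _ => rfl, fun h A hA => ?_⟩
  rwa [show A = fun _ => t from funext hA]

theorem satAll_rename_const (ψ : QF AP V) (T : Set (Trace AP)) :
    satAll T (ψ.rename fun _ : V => ()) ↔ ∀ t ∈ T, ψ.sat (fun _ => t) 0 := by
  simp only [satAll, QF.sat_rename]
  exact ⟨fun h t ht => h (fun _ => t) fun _ => ht, fun h A hA => h (A ()) (hA ())⟩

end

theorem pseudo_iff_forall_one_equivalent {AP V : Type} (ψ : QF AP V) :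
    (∃ P : Set (Trace AP), ∀ T : Set (Trace AP),
        satAll T ψ ↔ ∀ t ∈ T, t ∈ P) ↔
    (∀ T : Set (Trace AP),
        satAll T ψ ↔ satAll T (ψ.rename (fun _ : V => ()))) := by
  constructor
  · rintro ⟨P, hP⟩ T
    have hP_eq : ∀ t, ψ.sat (fun _ => t) 0 ↔ t ∈ P := fun t => by
      rw [← satAll_singleton, hP]; exact Set.singleton_subset_iff
    rw [hP, satAll_rename_const]
    exact forall₂_congr fun t _ => (hP_eq t).symm
  · intro h
    exact ⟨{t | ψ.sat (fun _ => t) 0}, fun T => (h T).trans (satAll_rename_const ψ T)⟩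
end

section
/- Conversely, if a set of traces T satisfies strategy consistency (any two traces agreeing on inputs up to time j agree on outputs up to time j) and T contains a trace for every infinite input sequence, then there exists a strategy σ with T = traces(σ). -/
/-- A trace over atomic propositions `I ⊕ O` (inputs and outputs). -/
abbrev ITrace (I O : Type) := ℕ → Set (I ⊕ O)

/-- A strategy maps (nonempty) finite sequences of input valuations to output valuations. -/
abbrev Strategy (I O : Type) := List (Set I) → Set O

/-- The trace generated by strategy `σ` on the infinite input word `w`:
    `σ_w(k) = w(k) ∪ σ(w(0) ⋯ w(k))`. -/
def genTrace {I O : Type} (σ : Strategy I O) (w : ℕ → Set I) : ITrace I O :=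
  fun k => (Sum.inl '' w k) ∪ (Sum.inr '' σ (((List.range (k + 1)).map w)))

def tracesOf {I O : Type} (σ : Strategy I O) : Set (ITrace I O) :=
  { t | ∃ w : ℕ → Set I, t = genTrace σ w }

def inputsAt {I O : Type} (t : ITrace I O) (k : ℕ) : Set I := { i | Sum.inl i ∈ t k }

def outputsAt {I O : Type} (t : ITrace I O) (k : ℕ) : Set O := { o | Sum.inr o ∈ t k }

/-! Choose for every input word `w` a trace `pick w ∈ T` with inputs `w`, and let `σ` answer
`w(0) ⋯ w(k)` with the outputs at time `k` of `pick (w(0) ⋯ w(k) ∅ ∅ ⋯)`. By consistency this is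
the output at time `k` of every trace of `T` whose inputs begin with `w(0) ⋯ w(k)`, so `T` is
contained in the traces of `σ`. Conversely, a trace of `σ` is determined by its inputs, so it is
the trace `pick` chose for them. -/

section Traces

variable {I O : Type}

theorem ITrace.ext_inputsAt_outputsAt {t t' : ITrace I O}
    (hin : ∀ k, inputsAt t k = inputsAt t' k) (hout : ∀ k, outputsAt t k = outputsAt t' k) :
    t = t' := by
  funext k
  ext (i | o)
  · exact Set.ext_iff.mp (hin k) i
  · exact Set.ext_iff.mp (hout k) o

@[simp]
theorem inputsAt_genTrace (σ : Strategy I O) (w : ℕ → Set I) : inputsAt (genTrace σ w) = w := by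
  funext k
  ext i
  simp [inputsAt, genTrace]

@[simp]
theorem outputsAt_genTrace (σ : Strategy I O) (w : ℕ → Set I) (k : ℕ) :
    outputsAt (genTrace σ w) k = σ ((List.range (k + 1)).map w) := by
  ext o
  simp [outputsAt, genTrace]

theorem eq_genTrace_inputsAt_of_mem_tracesOf {σ : Strategy I O} {t : ITrace I O}
    (ht : t ∈ tracesOf σ) : t = genTrace σ (inputsAt t) := by
  obtain ⟨w, rfl⟩ := ht
  rw [inputsAt_genTrace]

theorem injOn_inputsAt_tracesOf (σ : Strategy I O) : Set.InjOn inputsAt (tracesOf σ) := by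
  intro t ht t' ht' h
  rw [eq_genTrace_inputsAt_of_mem_tracesOf ht, eq_genTrace_inputsAt_of_mem_tracesOf ht', h]

theorem mem_tracesOf_iff {σ : Strategy I O} {t : ITrace I O} :
    t ∈ tracesOf σ ↔ ∀ k, outputsAt t k = σ ((List.range (k + 1)).map (inputsAt t)) := by
  refine ⟨?_, fun hout => ⟨inputsAt t, ?_⟩⟩
  · rintro ⟨w, rfl⟩ k
    simp
  · exact ITrace.ext_inputsAt_outputsAt (fun k => by simp) (fun k => by simp [hout])

def StrategyConsistent (T : Set (ITrace I O)) : Prop :=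
  ∀ t ∈ T, ∀ t' ∈ T, ∀ j : ℕ,
    (∀ k ≤ j, inputsAt t k = inputsAt t' k) → ∀ k ≤ j, outputsAt t k = outputsAt t' k

def strategyOfPick (pick : (ℕ → Set I) → ITrace I O) : Strategy I O :=
  fun l => outputsAt (pick fun k => l.getD k ∅) (l.length - 1)

theorem getD_map_range_of_le (w : ℕ → Set I) {j k : ℕ} (hj : j ≤ k) :
    ((List.range (k + 1)).map w).getD j ∅ = w j := by
  simp [List.getD_eq_getElem?_getD, List.getElem?_range (Nat.lt_succ_of_le hj)]

theorem strategyOfPick_map_range_inputsAt {T : Set (ITrace I O)} (hT : StrategyConsistent T)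
    {pick : (ℕ → Set I) → ITrace I O} (hpickT : ∀ w, pick w ∈ T)
    (hpickI : ∀ w k, inputsAt (pick w) k = w k) {t : ITrace I O} (ht : t ∈ T) (k : ℕ) :
    strategyOfPick pick ((List.range (k + 1)).map (inputsAt t)) = outputsAt t k := by
  rw [strategyOfPick, List.length_map, List.length_range, Nat.add_sub_cancel]
  refine hT _ (hpickT _) t ht k (fun j hj => ?_) k le_rfl
  rw [hpickI, getD_map_range_of_le _ hj]

theorem StrategyConsistent.subset_tracesOf_strategyOfPick {T : Set (ITrace I O)}
    (hT : StrategyConsistent T) {pick : (ℕ → Set I) → ITrace I O} (hpickT : ∀ w, pick w ∈ T)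
    (hpickI : ∀ w k, inputsAt (pick w) k = w k) :
    T ⊆ tracesOf (strategyOfPick pick) := fun _ ht =>
  mem_tracesOf_iff.mpr fun k => (strategyOfPick_map_range_inputsAt hT hpickT hpickI ht k).symm

end Traces

theorem consistent_total_trace_set_is_strategy {I O : Type} (T : Set (ITrace I O))
    (hTotal : ∀ w : ℕ → Set I, ∃ t ∈ T, ∀ k, inputsAt t k = w k)
    (hConsistent : ∀ t ∈ T, ∀ t' ∈ T, ∀ j : ℕ,
      (∀ k ≤ j, inputsAt t k = inputsAt t' k) → ∀ k ≤ j, outputsAt t k = outputsAt t' k) :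
    ∃ σ : Strategy I O, T = tracesOf σ := by
  choose pick hpickT hpickI using hTotal
  have hsub : T ⊆ tracesOf (strategyOfPick pick) :=
    StrategyConsistent.subset_tracesOf_strategyOfPick hConsistent hpickT hpickI
  refine ⟨strategyOfPick pick, hsub.antisymm fun t ht => ?_⟩
  have hpick : pick (inputsAt t) = t :=
    injOn_inputsAt_tracesOf _ (hsub (hpickT _)) ht (funext (hpickI _))
  exact hpick ▸ hpickT _
end
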